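/- Let k be a nonzero real number and let x, X : H₊ → H be bounded operators between complex Hilbert spaces with X Hilbert–Schmidt, such that X*x = 0 and x*x = k²·Id_{H₊} + X*X. Then the operator (Id_H + (4/k⁴)·x∘X*X∘x*)^{1/2} − Id_H (square root via the continuous functional calculus of the positive operator inside) is a trace-class operator on H, and Tr((Id_H + (4/k⁴)·x∘X*X∘x*)^{1/2} − Id_H) = (2/k²)·Tr(X*X). -/

import Mathlib

set_option maxHeartbeats 1000000
set_option synthInstance.maxHeartbeats 1000000

noncomputable section
namespace Paper
open ContinuousLinearMap

variable {E F : Type*}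
  [NormedAddCommGroup E] [InnerProductSpace ℂ E] [CompleteSpace E]
  [NormedAddCommGroup F] [InnerProductSpace ℂ F] [CompleteSpace F]

/-- `A` is a Hilbert–Schmidt operator: for every (equivalently some) Hilbert basis
the squared norms of the images of basis vectors are summable. -/
def IsHS (A : E →L[ℂ] F) : Prop :=
  ∀ (s : Set E) (b : HilbertBasis s ℂ E), Summable fun i => ‖A (b i)‖ ^ 2

/-- `A` is a trace-class operator: it factors as a composition of two
Hilbert–Schmidt operators. -/
def IsTC (A : E →L[ℂ] F) : Prop :=
  ∃ (B : E →L[ℂ] F) (C : E →L[ℂ] E), IsHS B ∧ IsHS C ∧ A = B ∘L C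


/-- The real continuous functional calculus `f(a)` for (self-adjoint) bounded
operators on a complex Hilbert space. -/
def cfcR (f : ℝ → ℝ) (a : E →L[ℂ] E) : E →L[ℂ] E :=
  letI i1 := IsStarNormal.instContinuousFunctionalCalculus (A := E →L[ℂ] E)
  letI i2 := IsSelfAdjoint.instContinuousFunctionalCalculus (A := E →L[ℂ] E)
  cfc f a

/-- Index set of a chosen Hilbert basis of `E`. -/
def basisIndex (E : Type*) [NormedAddCommGroup E] [InnerProductSpace ℂ E] [CompleteSpace E] :
    Set E :=
  (exists_hilbertBasis ℂ E).choose

/-- A chosen Hilbert basis of `E`. -/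
def stdHB (E : Type*) [NormedAddCommGroup E] [InnerProductSpace ℂ E] [CompleteSpace E] :
    HilbertBasis (basisIndex E) ℂ E :=
  (exists_hilbertBasis ℂ E).choose_spec.choose

/-- The trace of an operator (junk value if not trace class); for trace-class
operators this is independent of the chosen Hilbert basis. -/
def trace (A : E →L[ℂ] E) : ℂ :=
  ∑' i : basisIndex E, (inner ℂ ((stdHB E) i) (A ((stdHB E) i)) : ℂ)

/-- The Hilbert–Schmidt norm (junk value if not Hilbert–Schmidt). -/
def hsNorm (A : E →L[ℂ] F) : ℝ :=
  Real.sqrt (∑' i : basisIndex E, ‖A ((stdHB E) i)‖ ^ 2)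

/-- The trace norm `Tr √(A*A)` (junk value if not trace class), the square root
being given by the continuous functional calculus. -/
def traceNorm (A : E →L[ℂ] F) : ℝ :=
  (trace (cfc Real.sqrt (adjoint A ∘L A))).re

end Paper

/-! ### Auxiliary lemmas -/

noncomputable section Aux15
namespace Aux15
open Paper ContinuousLinearMap
open scoped NNReal ENNReal ComplexConjugate

variable {E F G : Type*}
  [NormedAddCommGroup E] [InnerProductSpace ℂ E] [CompleteSpace E]
  [NormedAddCommGroup F] [InnerProductSpace ℂ F] [CompleteSpace F]
  [NormedAddCommGroup G] [InnerProductSpace ℂ G] [CompleteSpace G]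

set_option linter.unusedSectionVars false

lemma parseval_hasSum {ι : Type*} (b : HilbertBasis ι ℂ E) (v : E) :
    HasSum (fun i => (‖(inner ℂ (b i) v : ℂ)‖ ^ 2 : ℝ)) (‖v‖ ^ 2) := by
  have h := b.hasSum_inner_mul_inner v v
  have hterm : ∀ i, (inner ℂ v (b i) : ℂ) * (inner ℂ (b i) v : ℂ)
      = ((‖(inner ℂ (b i) v : ℂ)‖ ^ 2 : ℝ) : ℂ) := by
    intro i
    rw [← inner_conj_symm v (b i), RCLike.conj_mul]
    norm_cast
  rw [← Complex.hasSum_ofReal]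
  simp_rw [← hterm]
  simpa [inner_self_eq_norm_sq_to_K] using h

lemma parseval_ennreal {ι : Type*} (b : HilbertBasis ι ℂ E) (v : E) :
    ∑' i, (↑(‖(inner ℂ (b i) v : ℂ)‖₊ ^ 2) : ℝ≥0∞) = (↑(‖v‖₊ ^ 2) : ℝ≥0∞) := by
  apply ENNReal.tsum_coe_eq
  rw [← NNReal.hasSum_coe]
  have h := parseval_hasSum b v
  have e1 : (fun i => ((‖(inner ℂ (b i) v : ℂ)‖₊ ^ 2 : ℝ≥0) : ℝ))
      = fun i => (‖(inner ℂ (b i) v : ℂ)‖ ^ 2 : ℝ) := by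
    funext i; push_cast; rfl
  have e2 : ((‖v‖₊ ^ 2 : ℝ≥0) : ℝ) = ‖v‖ ^ 2 := by push_cast; rfl
  rw [e1, e2]; exact h

lemma dsum {ιE ιF : Type*} (C : E →L[ℂ] F) (b : HilbertBasis ιE ℂ E)
    (c : HilbertBasis ιF ℂ F) :
    ∑' i, (↑(‖C (b i)‖₊ ^ 2) : ℝ≥0∞) = ∑' j, (↑(‖adjoint C (c j)‖₊ ^ 2) : ℝ≥0∞) := by
  calc ∑' i, (↑(‖C (b i)‖₊ ^ 2) : ℝ≥0∞)
      = ∑' i, ∑' j, (↑(‖(inner ℂ (c j) (C (b i)) : ℂ)‖₊ ^ 2) : ℝ≥0∞) :=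
        tsum_congr fun i => (parseval_ennreal c (C (b i))).symm
    _ = ∑' j, ∑' i, (↑(‖(inner ℂ (b i) (adjoint C (c j)) : ℂ)‖₊ ^ 2) : ℝ≥0∞) := by
        rw [ENNReal.tsum_comm]
        refine tsum_congr fun j => tsum_congr fun i => ?_
        rw [← adjoint_inner_left]
        congr 2
        rw [← inner_conj_symm, RCLike.nnnorm_conj]
    _ = ∑' j, (↑(‖adjoint C (c j)‖₊ ^ 2) : ℝ≥0∞) :=
        tsum_congr fun j => parseval_ennreal b _

/-- The Hilbert–Schmidt "sum of squares" in `ℝ≥0∞`, over the standard basis. -/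
def sumENN (C : E →L[ℂ] F) : ℝ≥0∞ :=
  ∑' i : basisIndex E, (↑(‖C ((stdHB E) i)‖₊ ^ 2) : ℝ≥0∞)

lemma sumENN_eq_basis {ι : Type*} (C : E →L[ℂ] F) (b : HilbertBasis ι ℂ E) :
    ∑' i, (↑(‖C (b i)‖₊ ^ 2) : ℝ≥0∞) = sumENN C :=
  (dsum C b (stdHB F)).trans (dsum C (stdHB E) (stdHB F)).symm

lemma summable_iff_ne_top {ι : Type*} (C : E →L[ℂ] F) (b : HilbertBasis ι ℂ E) :
    (Summable fun i => ‖C (b i)‖ ^ 2) ↔ ∑' i, (↑(‖C (b i)‖₊ ^ 2) : ℝ≥0∞) ≠ ⊤ := by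
  rw [ENNReal.tsum_coe_ne_top_iff_summable, ← NNReal.summable_coe]
  have e1 : (fun i => ((‖C (b i)‖₊ ^ 2 : ℝ≥0) : ℝ)) = fun i => (‖C (b i)‖ ^ 2 : ℝ) := by
    funext i; push_cast; rfl
  rw [e1]

lemma isHS_iff_ne_top (C : E →L[ℂ] F) : IsHS C ↔ sumENN C ≠ ⊤ := by
  constructor
  · intro h
    rw [← sumENN_eq_basis C (stdHB E)]
    exact (summable_iff_ne_top C (stdHB E)).mp (h _ _)
  · intro h s b
    rw [summable_iff_ne_top C b, sumENN_eq_basis C b]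
    exact h

lemma sumENN_adjoint (C : E →L[ℂ] F) : sumENN (adjoint C) = sumENN C :=
  (dsum C (stdHB E) (stdHB F)).symm

lemma isHS_adjoint {C : E →L[ℂ] F} (h : IsHS C) : IsHS (adjoint C) := by
  rw [isHS_iff_ne_top, sumENN_adjoint, ← isHS_iff_ne_top]; exact h

lemma sumENN_comp_le (D : F →L[ℂ] G) (C : E →L[ℂ] F) :
    sumENN (D ∘L C) ≤ (↑(‖D‖₊ ^ 2) : ℝ≥0∞) * sumENN C := by
  rw [sumENN, sumENN, ← ENNReal.tsum_mul_left]
  refine ENNReal.tsum_le_tsum fun i => ?_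
  rw [← ENNReal.coe_mul]
  apply ENNReal.coe_le_coe.mpr
  calc ‖(D ∘L C) ((stdHB E) i)‖₊ ^ 2 ≤ (‖D‖₊ * ‖C ((stdHB E) i)‖₊) ^ 2 :=
        pow_le_pow_left' (D.le_opNNNorm _) 2
    _ = ‖D‖₊ ^ 2 * ‖C ((stdHB E) i)‖₊ ^ 2 := mul_pow _ _ 2

lemma isHS_comp_left {C : E →L[ℂ] F} (h : IsHS C) (D : F →L[ℂ] G) : IsHS (D ∘L C) := by
  rw [isHS_iff_ne_top] at h ⊢
  exact ne_top_of_le_ne_top (ENNReal.mul_ne_top ENNReal.coe_ne_top h) (sumENN_comp_le D C)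

lemma isHS_comp_right {C : E →L[ℂ] F} (h : IsHS C) (D : G →L[ℂ] E) : IsHS (C ∘L D) := by
  rw [isHS_iff_ne_top] at h ⊢
  rw [← sumENN_adjoint, ContinuousLinearMap.adjoint_comp]
  refine ne_top_of_le_ne_top (ENNReal.mul_ne_top ENNReal.coe_ne_top ?_)
    (sumENN_comp_le (adjoint D) (adjoint C))
  rw [sumENN_adjoint]
  exact h

lemma cfcR_eq_cfc (f : ℝ → ℝ) (a : E →L[ℂ] E) : cfcR f a = cfc f a := rfl

end Aux15
end Aux15

open Aux15
open scoped NNReal ENNReal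

/- STATEMENT 15 (computation of the Kähler potential `K₁` on the level set, from the
proof of Theorem `fifi`): if `X` is Hilbert–Schmidt, `X*x = 0` and
`x*x = k²·Id + X*X`, then `(Id + (4/k⁴)·x X*X x*)^{1/2} − Id` is trace class and
`Tr((Id + (4/k⁴)·x X*X x*)^{1/2} − Id) = (2/k²)·Tr(X*X)`. -/
open Paper ContinuousLinearMap in
theorem statement15
    (Hplus : Type) [NormedAddCommGroup Hplus] [InnerProductSpace ℂ Hplus]
    [CompleteSpace Hplus]
    (H : Type) [NormedAddCommGroup H] [InnerProductSpace ℂ H] [CompleteSpace H]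
    (k : ℝ) (hk : k ≠ 0)
    (x X : Hplus →L[ℂ] H) (hX : IsHS X)
    (h1 : adjoint X ∘L x = 0)
    (h2 : adjoint x ∘L x =
      (k : ℂ) ^ 2 • (1 : Hplus →L[ℂ] Hplus) + adjoint X ∘L X) :
    IsTC (cfcR Real.sqrt ((1 : H →L[ℂ] H) +
        ((4 : ℂ) / (k : ℂ) ^ 4) • (x ∘L ((adjoint X ∘L X) ∘L adjoint x))) -
      (1 : H →L[ℂ] H)) ∧
    trace (cfcR Real.sqrt ((1 : H →L[ℂ] H) +
        ((4 : ℂ) / (k : ℂ) ^ 4) • (x ∘L ((adjoint X ∘L X) ∘L adjoint x))) -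
      (1 : H →L[ℂ] H)) =
      ((2 : ℂ) / (k : ℂ) ^ 2) * trace (adjoint X ∘L X) := by
  have hk2 : (0:ℝ) < k ^ 2 := by positivity
  set T : Hplus →L[ℂ] Hplus := adjoint X ∘L X with hT_def
  -- T is positive
  have hTpos : (0 : Hplus →L[ℂ] Hplus) ≤ T := by
    rw [ContinuousLinearMap.nonneg_iff_isPositive]
    have := (ContinuousLinearMap.isPositive_one (E := H)).adjoint_conj X
    simpa [ContinuousLinearMap.one_def] using this
  have hTsa : IsSelfAdjoint T := IsSelfAdjoint.of_nonneg hTpos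
  have hspec : ∀ t ∈ spectrum ℝ T, (0:ℝ) ≤ t := fun t ht =>
    spectrum_nonneg_of_nonneg hTpos ht
  have hden : ∀ t ∈ spectrum ℝ T, k ^ 2 * (k ^ 2 + t) ≠ 0 := by
    intro t ht
    have h0 := hspec t ht
    have : 0 < k ^ 2 * (k ^ 2 + t) := by nlinarith
    exact this.ne'
  -- the functions
  set w : ℝ → ℝ := fun t => 2 * t / (k ^ 2 * (k ^ 2 + t)) with hw_def
  set g : ℝ → ℝ := fun t => k ^ 2 + t with hg_def
  have hwcont : ContinuousOn w (spectrum ℝ T) :=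
    ContinuousOn.div (by fun_prop) (by fun_prop) hden
  have hgcont : ContinuousOn g (spectrum ℝ T) := by fun_prop
  have hwnn : ∀ t ∈ spectrum ℝ T, 0 ≤ w t := by
    intro t ht
    have h0 := hspec t ht
    have : 0 < k ^ 2 * (k ^ 2 + t) := by nlinarith
    exact div_nonneg (by linarith) this.le
  set B : Hplus →L[ℂ] Hplus := cfc w T with hB_def
  set W : H →L[ℂ] H := x ∘L (B ∘L adjoint x) with hW_def
  -- x*x as a cfc
  have hxx : adjoint x ∘L x = cfc g T := by
    have e := cfc_const_add (R := ℝ) (k^2) (fun t : ℝ => t) T continuousOn_id hTsa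
    rw [cfc_id' ℝ T hTsa] at e
    rw [h2, hg_def, e, Algebra.algebraMap_eq_smul_one]
    congr 1
    rw [show ((k:ℂ))^2 = algebraMap ℝ ℂ (k^2) by push_cast; rfl, algebraMap_smul]
  -- collapsing identity
  have hcollapse : ∀ P Q : Hplus →L[ℂ] Hplus,
      (x ∘L (P ∘L adjoint x)) ∘L (x ∘L (Q ∘L adjoint x))
        = x ∘L ((P ∘L (cfc g T ∘L Q)) ∘L adjoint x) := by
    intro P Q
    rw [← hxx]
    simp only [ContinuousLinearMap.comp_assoc]
  -- the square identity
  have hBg : B ∘L (cfc g T ∘L B) = cfc (fun t => w t * (g t * w t)) T := by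
    rw [cfc_mul w (fun t => g t * w t) T hwcont (hgcont.mul hwcont),
      cfc_mul g w T hgcont hwcont]
    rfl
  have hWW : W ∘L W = x ∘L ((cfc (fun t => w t * (g t * w t)) T) ∘L adjoint x) := by
    rw [hW_def, hcollapse, hBg]
  have hsum : W + (W + W ∘L W)
      = x ∘L ((cfc (fun t => w t + (w t + w t * (g t * w t))) T) ∘L adjoint x) := by
    rw [hWW, hW_def, hB_def]
    rw [cfc_add (a := T) (f := w) (g := fun t => w t + w t * (g t * w t)) hwcont
      (hwcont.add (hwcont.mul (hgcont.mul hwcont)))]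
    rw [cfc_add (a := T) (f := w) (g := fun t => w t * (g t * w t)) hwcont
      (hwcont.mul (hgcont.mul hwcont))]
    simp only [ContinuousLinearMap.comp_add, ContinuousLinearMap.add_comp]
  have hfun : cfc (fun t => w t + (w t + w t * (g t * w t))) T
      = cfc (fun t : ℝ => (4 / k ^ 4) * t) T := by
    apply cfc_congr
    intro t ht
    have h0 := hspec t ht
    have hgt : 0 < k ^ 2 + t := by linarith
    simp only [hw_def, hg_def]
    field_simp
    ring
  have hconst : cfc (fun t : ℝ => (4 / k ^ 4) * t) T = (4 / k ^ 4 : ℝ) • T :=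
    cfc_const_mul_id (4 / k ^ 4 : ℝ) T hTsa
  have hscal : ((4 : ℂ) / (k:ℂ) ^ 4) • (x ∘L (T ∘L adjoint x))
      = (4 / k ^ 4 : ℝ) • (x ∘L (T ∘L adjoint x)) := by
    rw [show ((4 : ℂ) / (k:ℂ) ^ 4) = algebraMap ℝ ℂ (4 / k ^ 4) by push_cast; rfl,
      algebraMap_smul]
  set A : H →L[ℂ] H := (1 : H →L[ℂ] H) +
      ((4 : ℂ) / (k:ℂ) ^ 4) • (x ∘L (T ∘L adjoint x)) with hA_def
  have hsq : (1 + W) * (1 + W) = A := by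
    have hexp : (1 + W) * (1 + W) = 1 + (W + (W + W * W)) := by noncomm_ring
    rw [hexp, hA_def, hscal]
    congr 1
    rw [show W * W = W ∘L W from rfl, hsum, hfun, hconst]
    simp only [ContinuousLinearMap.comp_smul, ContinuousLinearMap.smul_comp]
  -- positivity
  have hBpos : (0 : Hplus →L[ℂ] Hplus) ≤ B := cfc_nonneg hwnn
  have hWpos : W.IsPositive := by
    have hBp := (ContinuousLinearMap.nonneg_iff_isPositive B).mp hBpos
    have := hBp.conj_adjoint x
    simpa [ContinuousLinearMap.comp_assoc] using this
  have hWsa : IsSelfAdjoint W := hWpos.isSelfAdjoint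
  have h1Wpos : (0 : H →L[ℂ] H) ≤ 1 + W :=
    (ContinuousLinearMap.nonneg_iff_isPositive _).mpr
      (ContinuousLinearMap.isPositive_one.add hWpos)
  have h1Wsa : IsSelfAdjoint (1 + W) := by
    first
    | exact (IsSelfAdjoint.one _).add hWsa
    | exact IsSelfAdjoint.one.add hWsa
  have hApos : (0 : H →L[ℂ] H) ≤ A := by
    have := star_mul_self_nonneg (1 + W)
    rwa [h1Wsa.star_eq, hsq] at this
  -- the square root
  have hsqrtA : cfcR Real.sqrt A = 1 + W := by
    rw [cfcR_eq_cfc]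
    have : cfc Real.sqrt A = CFC.sqrt A := by
      rw [CFC.sqrt_eq_cfc, cfc_nnreal_eq_real NNReal.sqrt A hApos]
      congr 1
      funext t
      rw [Real.sqrt]
    rw [this]
    exact CFC.sqrt_unique hsq h1Wpos
  have hkey : cfcR Real.sqrt ((1 : H →L[ℂ] H) +
      ((4 : ℂ) / (k : ℂ) ^ 4) • (x ∘L ((adjoint X ∘L X) ∘L adjoint x))) -
      (1 : H →L[ℂ] H) = W := by
    rw [show (1 : H →L[ℂ] H) +
      ((4 : ℂ) / (k : ℂ) ^ 4) • (x ∘L ((adjoint X ∘L X) ∘L adjoint x)) = A from rfl]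
    rw [hsqrtA]
    exact add_sub_cancel_left 1 W
  rw [hkey]
  -- square-root factor of `B` through `X`
  set m : ℝ → ℝ := fun t => Real.sqrt (2 / (k ^ 2 * (k ^ 2 + t))) with hm_def
  have hmcont : ContinuousOn m (spectrum ℝ T) :=
    Real.continuous_sqrt.comp_continuousOn (continuousOn_const.div (by fun_prop) hden)
  have hmm : cfc m T ∘L (T ∘L cfc m T) = B := by
    have h1' : cfc m T * (cfc (fun t : ℝ => t) T * cfc m T)
        = cfc (fun t => m t * (t * m t)) T := by
      rw [cfc_mul (a := T) (f := m) (g := fun t => t * m t) hmcont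
        (continuousOn_id.mul hmcont),
        cfc_mul (a := T) (f := fun t : ℝ => t) (g := m) continuousOn_id hmcont]
    have h2' : cfc (fun t => m t * (t * m t)) T = cfc w T := by
      apply cfc_congr
      intro t ht
      have h0 := hspec t ht
      have hpos : 0 < k ^ 2 * (k ^ 2 + t) := by nlinarith
      have hnn : (0:ℝ) ≤ 2 / (k ^ 2 * (k ^ 2 + t)) := by positivity
      have : m t * m t = 2 / (k ^ 2 * (k ^ 2 + t)) := Real.mul_self_sqrt hnn
      simp only [hw_def]
      calc m t * (t * m t) = (m t * m t) * t := by ring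
        _ = (2 / (k ^ 2 * (k ^ 2 + t))) * t := by rw [this]
        _ = 2 * t / (k ^ 2 * (k ^ 2 + t)) := by ring
    rw [cfc_id' ℝ T hTsa] at h1'
    rw [show cfc m T ∘L (T ∘L cfc m T) = cfc m T * (T * cfc m T) from rfl, h1', h2', hB_def]
  -- the square root of `B`
  set sq : ℝ → ℝ := fun t => Real.sqrt (w t) with hsq_def
  have hsqcont : ContinuousOn sq (spectrum ℝ T) :=
    Real.continuous_sqrt.comp_continuousOn hwcont
  set r : Hplus →L[ℂ] Hplus := cfc sq T with hr_def
  have hrsa : IsSelfAdjoint r := cfc_predicate sq T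
  have hradj : adjoint r = r := hrsa.adjoint_eq
  have hrr : r ∘L r = B := by
    have h1' : cfc sq T * cfc sq T = cfc (fun t => sq t * sq t) T :=
      (cfc_mul (a := T) (f := sq) (g := sq) hsqcont hsqcont).symm
    have h2' : cfc (fun t => sq t * sq t) T = cfc w T := by
      apply cfc_congr
      intro t ht
      exact Real.mul_self_sqrt (hwnn t ht)
    rw [show r ∘L r = r * r from rfl, hr_def, h1', h2', hB_def]
  set C₀ : Hplus →L[ℂ] H := x ∘L r with hC0_def
  have hC0adj : adjoint C₀ = r ∘L adjoint x := by
    rw [hC0_def, ContinuousLinearMap.adjoint_comp, hradj]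
  refine ⟨?_, ?_⟩
  · -- trace class
    refine ⟨(x ∘L cfc m T) ∘L adjoint X, X ∘L (cfc m T ∘L adjoint x),
      isHS_comp_left (isHS_adjoint hX) _, isHS_comp_right hX _, ?_⟩
    rw [hW_def, ← hmm, hT_def]
    simp only [ContinuousLinearMap.comp_assoc]
  · -- the trace identity
    -- pointwise values
    have htermW : ∀ v : H, (inner ℂ v (W v) : ℂ) = ((‖(adjoint C₀) v‖ ^ 2 : ℝ) : ℂ) := by
      intro v
      have hv : W v = x (r (r (adjoint x v))) := by
        rw [hW_def, ← hrr]; rfl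
      rw [hv]
      rw [← adjoint_inner_left x (r (r (adjoint x v))) v]
      rw [show (r (r (adjoint x v))) = r (r (adjoint x v)) from rfl]
      rw [← adjoint_inner_left r (r (adjoint x v)) (adjoint x v), hradj]
      rw [show (adjoint C₀) v = r (adjoint x v) by rw [hC0adj]; rfl]
      rw [inner_self_eq_norm_sq_to_K]
      norm_cast
    have htermT : ∀ v : Hplus, (inner ℂ v (T v) : ℂ) = ((‖X v‖ ^ 2 : ℝ) : ℂ) := by
      intro v
      have hv : T v = adjoint X (X v) := rfl
      rw [hv, adjoint_inner_right X v (X v), inner_self_eq_norm_sq_to_K]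
      norm_cast
    -- the composition identity `C₀* C₀ = (2/k²) T`
    have hcomp : adjoint C₀ ∘L C₀ = (2 / k ^ 2 : ℝ) • T := by
      rw [hC0adj, hC0_def]
      have hassoc : (r ∘L adjoint x) ∘L (x ∘L r) = r ∘L ((adjoint x ∘L x) ∘L r) := by
        simp only [ContinuousLinearMap.comp_assoc]
      rw [hassoc, hxx]
      have h1' : cfc sq T * (cfc g T * cfc sq T)
          = cfc (fun t => sq t * (g t * sq t)) T := by
        rw [cfc_mul (a := T) (f := sq) (g := fun t => g t * sq t) hsqcont
          (hgcont.mul hsqcont),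
          cfc_mul (a := T) (f := g) (g := sq) hgcont hsqcont]
      have h2' : cfc (fun t => sq t * (g t * sq t)) T
          = cfc (fun t : ℝ => (2 / k ^ 2) * t) T := by
        apply cfc_congr
        intro t ht
        have h0 := hspec t ht
        have hgt : 0 < k ^ 2 + t := by linarith
        have : sq t * sq t = w t := Real.mul_self_sqrt (hwnn t ht)
        calc sq t * (g t * sq t) = (sq t * sq t) * g t := by ring
          _ = w t * g t := by rw [this]
          _ = (2 / k ^ 2) * t := by
              simp only [hw_def, hg_def]
              field_simp
      rw [show r ∘L (cfc g T ∘L r) = r * (cfc g T * r) from rfl, hr_def, h1', h2',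
        cfc_const_mul_id (2 / k ^ 2 : ℝ) T hTsa]
    -- pointwise norm identity
    have hpt : ∀ v : Hplus, (‖C₀ v‖ ^ 2 : ℝ) = (2 / k ^ 2) * ‖X v‖ ^ 2 := by
      intro v
      have e1 : ((‖C₀ v‖ ^ 2 : ℝ) : ℂ) = (inner ℂ (C₀ v) (C₀ v) : ℂ) := by
        rw [inner_self_eq_norm_sq_to_K]; norm_cast
      have e2 : (inner ℂ (C₀ v) (C₀ v) : ℂ) = (inner ℂ v ((adjoint C₀ ∘L C₀) v) : ℂ) := by
        rw [show (adjoint C₀ ∘L C₀) v = adjoint C₀ (C₀ v) from rfl,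
          adjoint_inner_right]
      have e3 : (inner ℂ v ((adjoint C₀ ∘L C₀) v) : ℂ)
          = ((2 / k ^ 2 : ℝ) : ℂ) * (inner ℂ v (T v) : ℂ) := by
        rw [hcomp]
        rw [show ((2 / k ^ 2 : ℝ) • T) v = (2 / k ^ 2 : ℝ) • (T v) from rfl]
        rw [show (2 / k ^ 2 : ℝ) • (T v) = ((2 / k ^ 2 : ℝ) : ℂ) • (T v) from
          (Complex.coe_smul _ _).symm]
        rw [inner_smul_right]
      have := e1.trans (e2.trans e3)
      rw [htermT v] at this
      have h4 : ((‖C₀ v‖ ^ 2 : ℝ) : ℂ) = (((2 / k ^ 2) * ‖X v‖ ^ 2 : ℝ) : ℂ) := by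
        rw [this]; push_cast; ring
      exact_mod_cast h4
    -- nnreal pointwise identity
    set c2 : ℝ≥0 := (2 / k ^ 2 : ℝ).toNNReal with hc2_def
    have hc2coe : (c2 : ℝ) = 2 / k ^ 2 := Real.coe_toNNReal _ (by positivity)
    have hptn : ∀ v : Hplus, (‖C₀ v‖₊ ^ 2 : ℝ≥0) = c2 * ‖X v‖₊ ^ 2 := by
      intro v
      apply NNReal.coe_injective
      push_cast [hc2coe]
      exact hpt v
    -- ENNReal sum identity
    have hsum1 : ∑' i : basisIndex H, (↑(‖adjoint C₀ ((stdHB H) i)‖₊ ^ 2) : ℝ≥0∞)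
        = (c2 : ℝ≥0∞) * ∑' j : basisIndex Hplus, (↑(‖X ((stdHB Hplus) j)‖₊ ^ 2) : ℝ≥0∞) := by
      rw [← dsum C₀ (stdHB Hplus) (stdHB H), ← ENNReal.tsum_mul_left]
      refine tsum_congr fun j => ?_
      rw [hptn ((stdHB Hplus) j), ENNReal.coe_mul]
    have hXfin : ∑' j : basisIndex Hplus, (↑(‖X ((stdHB Hplus) j)‖₊ ^ 2) : ℝ≥0∞) ≠ ⊤ :=
      (summable_iff_ne_top X (stdHB Hplus)).mp (hX _ _)
    have hWfin : ∑' i : basisIndex H, (↑(‖adjoint C₀ ((stdHB H) i)‖₊ ^ 2) : ℝ≥0∞) ≠ ⊤ := by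
      rw [hsum1]
      exact ENNReal.mul_ne_top ENNReal.coe_ne_top hXfin
    -- NNReal summability
    have hsX : Summable fun j : basisIndex Hplus => (‖X ((stdHB Hplus) j)‖₊ ^ 2 : ℝ≥0) :=
      ENNReal.tsum_coe_ne_top_iff_summable.mp hXfin
    have hsW : Summable fun i : basisIndex H => (‖adjoint C₀ ((stdHB H) i)‖₊ ^ 2 : ℝ≥0) :=
      ENNReal.tsum_coe_ne_top_iff_summable.mp hWfin
    -- NNReal sum identity
    have hsum2 : ∑' i : basisIndex H, (‖adjoint C₀ ((stdHB H) i)‖₊ ^ 2 : ℝ≥0)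
        = c2 * ∑' j : basisIndex Hplus, (‖X ((stdHB Hplus) j)‖₊ ^ 2 : ℝ≥0) := by
      apply ENNReal.coe_injective
      rw [ENNReal.coe_tsum hsW, ENNReal.coe_mul, ENNReal.coe_tsum hsX]
      exact hsum1
    -- real sum identity
    have hsum3 : ∑' i : basisIndex H, (‖adjoint C₀ ((stdHB H) i)‖ ^ 2 : ℝ)
        = (2 / k ^ 2) * ∑' j : basisIndex Hplus, (‖X ((stdHB Hplus) j)‖ ^ 2 : ℝ) := by
      have := congrArg (fun q : ℝ≥0 => (q : ℝ)) hsum2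
      push_cast [NNReal.coe_tsum, hc2coe] at this
      convert this using 2 <;> funext <;> push_cast <;> rfl
    -- assemble
    rw [Paper.trace, Paper.trace]
    calc ∑' i : basisIndex H, (inner ℂ ((stdHB H) i) (W ((stdHB H) i)) : ℂ)
        = ∑' i : basisIndex H, ((‖adjoint C₀ ((stdHB H) i)‖ ^ 2 : ℝ) : ℂ) :=
          tsum_congr fun i => htermW _
      _ = ((∑' i : basisIndex H, (‖adjoint C₀ ((stdHB H) i)‖ ^ 2 : ℝ) : ℝ) : ℂ) :=
          (Complex.ofReal_tsum _).symm
      _ = (((2 / k ^ 2) * ∑' j : basisIndex Hplus, (‖X ((stdHB Hplus) j)‖ ^ 2 : ℝ) : ℝ) : ℂ) := by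
          rw [hsum3]
      _ = ((2 : ℂ) / (k : ℂ) ^ 2) *
            ((∑' j : basisIndex Hplus, (‖X ((stdHB Hplus) j)‖ ^ 2 : ℝ) : ℝ) : ℂ) := by
          push_cast; ring
      _ = ((2 : ℂ) / (k : ℂ) ^ 2) *
            ∑' j : basisIndex Hplus, (inner ℂ ((stdHB Hplus) j) (T ((stdHB Hplus) j)) : ℂ) := by
          rw [Complex.ofReal_tsum]
          congr 1
          exact tsum_congr fun j => (htermT _).symm
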